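/- For real vectors in R^3 representing observations with class labels, define g_k(v_1,...,v_n) = (4/(n(n_k-1))) · Σ_{i<t} 𝟙{(v_{i1}-v_{t1})(v_{i2}-v_{t2}) > 0, v_{i3} = k, v_{t3} = k}, where n_k is the number of indices i with v_{i3} = k. When the third coordinates (class labels) are held fixed, g_k satisfies the bounded differences property in the first two coordinates with constant 4/n. -/

import Mathlib

open Finset
open scoped Classical

/-- Number of sample points whose class label (third coordinate) equals `k`. -/
noncomputable def nClass (n : ℕ) (k : ℝ) (v : Fin n → ℝ × ℝ × ℝ) : ℕ :=
  (Finset.univ.filter fun i => (v i).2.2 = k).card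

/-- The class-`k` empirical Kendall concordance-count function `g_k`. -/
noncomputable def kifGk (n : ℕ) (k : ℝ) (v : Fin n → ℝ × ℝ × ℝ) : ℝ :=
  4 / ((n : ℝ) * ((nClass n k v : ℝ) - 1)) *
    ∑ i : Fin n, ∑ t : Fin n,
      (if i < t ∧ ((v i).1 - (v t).1) * ((v i).2.1 - (v t).2.1) > 0 ∧
          (v i).2.2 = k ∧ (v t).2.2 = k then (1 : ℝ) else 0)

/-!
Changing the point `m` only affects the terms of the double sum in row `m` and column `m`. For
`j ≠ m` exactly one of the pairs `(m, j)`, `(j, m)` is ordered, so together they change the count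
by at most one, and only when both `m` and `j` carry the label `k`. The count therefore changes by
at most `n_k - 1`, which the normalisation `4 / (n (n_k - 1))` turns into `4 / n`.
-/

theorem abs_sum_sum_sub_le_sum_row_add_col {ι : Type*} [Fintype ι] (F G : ι → ι → ℝ) (m : ι)
    (hFG : ∀ i t, i ≠ m → t ≠ m → F i t = G i t) :
    |∑ i, ∑ t, F i t - ∑ i, ∑ t, G i t| ≤ ∑ j, (|F m j - G m j| + |F j m - G j m|) := by
  simp_rw [← sum_sub_distrib]
  calc |∑ i, ∑ t, (F i t - G i t)| ≤ ∑ i, ∑ t, |F i t - G i t| :=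
        (abs_sum_le_sum_abs _ _).trans (sum_le_sum fun i _ => abs_sum_le_sum_abs _ _)
    _ ≤ ∑ i, ∑ t, ((if i = m then |F m t - G m t| else 0) +
          (if t = m then |F i m - G i m| else 0)) := by
        gcongr with i _ t _
        split_ifs with hi ht ht <;> subst_vars <;> simp_all
    _ = ∑ j, (|F m j - G m j| + |F j m - G j m|) := by
        simp [sum_add_distrib]

section Concordance

variable {n : ℕ} (k : ℝ)

noncomputable def concordantPair (w : Fin n → ℝ × ℝ × ℝ) (i t : Fin n) : ℝ :=
  if i < t ∧ ((w i).1 - (w t).1) * ((w i).2.1 - (w t).2.1) > 0 ∧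
      (w i).2.2 = k ∧ (w t).2.2 = k then 1 else 0

theorem kifGk_eq (v : Fin n → ℝ × ℝ × ℝ) :
    kifGk n k v = 4 / ((n : ℝ) * ((nClass n k v : ℝ) - 1)) *
      ∑ i, ∑ t, concordantPair k v i t :=
  rfl

variable {k} {v v' : Fin n → ℝ × ℝ × ℝ}

theorem nClass_congr (hlab : ∀ i, (v' i).2.2 = (v i).2.2) : nClass n k v' = nClass n k v := by
  simp only [nClass, hlab]

theorem abs_concordantPair_sub_add_le (hlab : ∀ i, (v' i).2.2 = (v i).2.2) (m j : Fin n) :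
    |concordantPair k v m j - concordantPair k v' m j| +
        |concordantPair k v j m - concordantPair k v' j m| ≤
      if j ≠ m ∧ (v m).2.2 = k ∧ (v j).2.2 = k then 1 else 0 := by
  unfold concordantPair
  rw [hlab m, hlab j]
  split_ifs <;> simp_all [lt_asymm]

theorem sum_ite_sameClass_le_nClass_sub_one (m : Fin n) :
    ∑ j, (if j ≠ m ∧ (v m).2.2 = k ∧ (v j).2.2 = k then (1 : ℝ) else 0) ≤
      ((nClass n k v - 1 : ℕ) : ℝ) := by
  by_cases hm : (v m).2.2 = k
  · have hmem : m ∈ univ.filter fun j => (v j).2.2 = k := by simp [hm]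
    rw [sum_boole, nClass, ← card_erase_of_mem hmem]
    exact_mod_cast card_le_card fun j => by simp [hm, and_comm]
  · simp [hm]

end Concordance

/-- The truncated `N - 1` and the junk value of the division make this hold also for `N ≤ 1`. -/
theorem abs_div_mul_sub_one_mul_le {a c : ℝ} (ha : 0 ≤ a) (hc : 0 ≤ c) (N : ℕ) :
    |c / (a * ((N : ℝ) - 1))| * ((N - 1 : ℕ) : ℝ) ≤ c / a := by
  rcases N with _ | _ | N
  · simpa using div_nonneg hc ha
  · simpa using div_nonneg hc ha
  push_cast
  rw [add_sub_cancel_right, abs_of_nonneg (by positivity), ← div_div,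
    div_mul_cancel₀ _ (by positivity)]

theorem stmt3_general (n : ℕ) (k : ℝ) (v v' : Fin n → ℝ × ℝ × ℝ) (m : Fin n)
    (h : ∀ i, i ≠ m → v i = v' i) (hlab : (v' m).2.2 = (v m).2.2) :
    |kifGk n k v - kifGk n k v'| ≤ 4 / n := by
  have hlabels : ∀ i, (v' i).2.2 = (v i).2.2 := fun i => by
    by_cases hi : i = m
    · exact hi ▸ hlab
    · rw [h i hi]
  have hcount : |∑ i, ∑ t, concordantPair k v i t - ∑ i, ∑ t, concordantPair k v' i t| ≤
      ((nClass n k v - 1 : ℕ) : ℝ) :=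
    calc _ ≤ _ := abs_sum_sum_sub_le_sum_row_add_col _ _ m fun i t hi ht => by
          simp only [concordantPair, h i hi, h t ht]
      _ ≤ _ := sum_le_sum fun j _ => abs_concordantPair_sub_add_le hlabels m j
      _ ≤ _ := sum_ite_sameClass_le_nClass_sub_one m
  rw [kifGk_eq, kifGk_eq, nClass_congr hlabels, ← mul_sub, abs_mul]
  calc _ ≤ |4 / ((n : ℝ) * ((nClass n k v : ℝ) - 1))| * ((nClass n k v - 1 : ℕ) : ℝ) :=
        mul_le_mul_of_nonneg_left hcount (abs_nonneg _)
    _ ≤ 4 / n := abs_div_mul_sub_one_mul_le n.cast_nonneg (by norm_num) _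

/-- when the class labels are held fixed (the changed point keeps
its label), `g_k` satisfies the bounded differences property with constant `4/n`. -/
theorem stmt3 (n : ℕ) (hn : 2 ≤ n) (k : ℝ) (v v' : Fin n → ℝ × ℝ × ℝ) (m : Fin n)
    (h : ∀ i, i ≠ m → v i = v' i) (hlab : (v' m).2.2 = (v m).2.2)
    (hnk : 2 ≤ nClass n k v) :
    |kifGk n k v - kifGk n k v'| ≤ 4 / n :=
  stmt3_general n k v v' m h hlab
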